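/- arXiv:2510.02118 — 3 statements merged into one kernel-verified Lean document; each statement's English description precedes it below -/
import Mathlib

section
/- For any s ∈ [-1, 0) and any x ∈ [0, 1), the function g(x) = (1/x - 1) · Li_s(x), where Li_s(x) = Σ_{k=1}^∞ x^k / k^s is the polylogarithm, is strictly increasing on (0, 1). -/
/-!
Writing `Li_s(x) = ∑ xᵏ⁺¹ aₖ` with `aₖ = (k+1)⁻ˢ`, an index shift gives
`(1/x - 1) Li_s(x) = a₀ + ∑ xᵏ⁺¹ (aₖ₊₁ - aₖ)`. For `s < 0` the sequence `aₖ` is strictly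
increasing, so this is a power series with positive coefficients, hence strictly increasing
on `[0, 1)`.
-/

open Set

/-- The polylogarithm `Li_s(x) = ∑_{k=1}^∞ x^k / k^s`. -/
noncomputable def Li (s x : ℝ) : ℝ := ∑' k : ℕ, x ^ (k + 1) / ((k : ℝ) + 1) ^ s

lemma Li_eq_tsum (s x : ℝ) : Li s x = ∑' k : ℕ, x ^ (k + 1) * ((k : ℝ) + 1) ^ (-s) := by
  refine tsum_congr fun k => ?_
  rw [Real.rpow_neg (by positivity), div_eq_mul_inv]

lemma summable_pow_mul_add_one_rpow {x : ℝ} (hx : |x| < 1) (t : ℝ) :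
    Summable fun k : ℕ => x ^ k * ((k : ℝ) + 1) ^ t := by
  obtain ⟨n, htn⟩ := exists_nat_ge t
  have hgeom : Summable fun k : ℕ => (2 : ℝ) ^ n * ((k : ℝ) ^ n * |x| ^ k) :=
    (summable_pow_mul_geometric_of_norm_lt_one (R := ℝ) n
      (by rwa [Real.norm_eq_abs, abs_abs])).mul_left _
  refine hgeom.of_norm_bounded_eventually_nat (Filter.eventually_atTop.2 ⟨1, fun k hk => ?_⟩)
  have hk1 : (1 : ℝ) ≤ k := by exact_mod_cast hk
  calc ‖x ^ k * ((k : ℝ) + 1) ^ t‖ = |x| ^ k * ((k : ℝ) + 1) ^ t := by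
        rw [Real.norm_eq_abs, abs_mul, abs_pow, abs_of_nonneg (Real.rpow_nonneg (by positivity) t)]
    _ ≤ |x| ^ k * (2 * k) ^ n := by
        gcongr
        calc ((k : ℝ) + 1) ^ t ≤ ((k : ℝ) + 1) ^ (n : ℝ) :=
              Real.rpow_le_rpow_of_exponent_le (by linarith) htn
          _ ≤ (2 * k) ^ n := by rw [Real.rpow_natCast]; gcongr; linarith
    _ = 2 ^ n * ((k : ℝ) ^ n * |x| ^ k) := by ring

section IndexShift

variable {x : ℝ} {a : ℕ → ℝ}

lemma summable_pow_succ_mul (ha : Summable fun k => x ^ k * a k) :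
    Summable fun k => x ^ (k + 1) * a k :=
  (ha.mul_left x).congr fun k => by ring

lemma summable_pow_succ_mul_sub (ha : Summable fun k => x ^ k * a k) :
    Summable fun k => x ^ (k + 1) * (a (k + 1) - a k) := by
  simpa only [mul_sub] using ((summable_nat_add_iff 1).2 ha).sub (summable_pow_succ_mul ha)

lemma one_div_sub_one_mul_tsum_pow_succ_mul (hx : x ≠ 0) (ha : Summable fun k => x ^ k * a k) :
    (1 / x - 1) * ∑' k, x ^ (k + 1) * a k = a 0 + ∑' k, x ^ (k + 1) * (a (k + 1) - a k) := by
  calc (1 / x - 1) * ∑' k, x ^ (k + 1) * a k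
      = ∑' k, x ^ k * a k - ∑' k, x ^ (k + 1) * a k := by
        rw [sub_mul, one_mul, ← tsum_mul_left]
        congr 1
        exact tsum_congr fun k => by field_simp; ring
    _ = a 0 + ∑' k, x ^ (k + 1) * a (k + 1) - ∑' k, x ^ (k + 1) * a k := by
        rw [ha.tsum_eq_zero_add, pow_zero, one_mul]
    _ = a 0 + ∑' k, x ^ (k + 1) * (a (k + 1) - a k) := by
        rw [add_sub_assoc, ← ((summable_nat_add_iff 1).2 ha).tsum_sub (summable_pow_succ_mul ha)]
        simp only [mul_sub]

end IndexShift

lemma tsum_pow_succ_mul_lt_tsum_pow_succ_mul {c : ℕ → ℝ} (hc : ∀ k, 0 ≤ c k) (hc0 : 0 < c 0)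
    {x y : ℝ} (hx : 0 ≤ x) (hxy : x < y) (hy : Summable fun k => y ^ (k + 1) * c k) :
    ∑' k, x ^ (k + 1) * c k < ∑' k, y ^ (k + 1) * c k := by
  have hle : ∀ k, x ^ (k + 1) * c k ≤ y ^ (k + 1) * c k := fun k =>
    mul_le_mul_of_nonneg_right (pow_le_pow_left₀ hx hxy.le _) (hc k)
  refine Summable.tsum_lt_tsum (i := 0) hle (by simpa using mul_lt_mul_of_pos_right hxy hc0)
    (hy.of_nonneg_of_le (fun k => mul_nonneg (pow_nonneg hx _) (hc k)) hle) hy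

/-- For any `s ∈ [-1, 0)`, the function `x ↦ (1/x - 1) · Li_s(x)` is strictly
increasing on `(0, 1)`. -/
theorem stmt0 (s : ℝ) (hs : s ∈ Set.Ico (-1 : ℝ) 0) :
    StrictMonoOn (fun x : ℝ => (1 / x - 1) * Li s x) (Set.Ioo (0 : ℝ) 1) := by
  set a : ℕ → ℝ := fun k => ((k : ℝ) + 1) ^ (-s)
  have ha : ∀ z ∈ Ioo (0 : ℝ) 1, Summable fun k => z ^ k * a k := fun z hz =>
    summable_pow_mul_add_one_rpow (by rw [abs_of_pos hz.1]; exact hz.2) (-s)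
  have hLi : ∀ z ∈ Ioo (0 : ℝ) 1,
      (1 / z - 1) * Li s z = 1 + ∑' k, z ^ (k + 1) * (a (k + 1) - a k) := fun z hz => by
    rw [Li_eq_tsum, one_div_sub_one_mul_tsum_pow_succ_mul hz.1.ne' (ha z hz)]
    simp [a]
  have hcoeff_pos : ∀ k, 0 < a (k + 1) - a k := fun k => by
    refine sub_pos.2 (Real.rpow_lt_rpow (by positivity) ?_ (neg_pos.2 hs.2))
    push_cast
    linarith
  intro x hx y hy hxy
  simp only [hLi x hx, hLi y hy]
  exact add_lt_add_right (tsum_pow_succ_mul_lt_tsum_pow_succ_mul (fun k => (hcoeff_pos k).le)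
    (hcoeff_pos 0) hx.1.le hxy (summable_pow_succ_mul_sub (ha y hy))) 1
end

section
/- For x ∈ (0,1) and s ∈ [-1, 0), the series (1-x)·Li_{s-1}(x) - Li_s(x) = Σ_{k=1}^∞ x^k·((1-x)k - 1)·k^{-s} is strictly positive. -/
open Real

lemma base_summable {x : ℝ} (hx0 : 0 ≤ x) (hx1 : x < 1) :
    Summable (fun k : ℕ => ((k : ℝ) + 1) ^ 2 * x ^ (k + 1)) := by
  have hx : ‖x‖ < 1 := by rwa [Real.norm_eq_abs, abs_of_nonneg hx0]
  have h := (summable_pow_mul_geometric_of_norm_lt_one 2 hx).comp_injective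
    Nat.succ_injective
  refine h.congr fun k => ?_
  simp only [Function.comp, Nat.succ_eq_add_one]
  push_cast
  ring

lemma sum_aux {x : ℝ} (hx0 : 0 ≤ x) (hx1 : x < 1) {r : ℝ} (hr : r ≤ 2) :
    Summable (fun k : ℕ => x ^ (k + 1) * ((k : ℝ) + 1) ^ r) := by
  refine Summable.of_nonneg_of_le (fun k => by positivity) (fun k => ?_)
    (base_summable hx0 hx1)
  have h1 : (1 : ℝ) ≤ (k : ℝ) + 1 := le_add_of_nonneg_left (Nat.cast_nonneg k)
  have h2 : ((k : ℝ) + 1) ^ r ≤ ((k : ℝ) + 1) ^ (2 : ℝ) :=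
    Real.rpow_le_rpow_of_exponent_le h1 hr
  have h3 : ((k : ℝ) + 1) ^ (2 : ℝ) = ((k : ℝ) + 1) ^ (2 : ℕ) := by
    rw [← Real.rpow_natCast]; norm_num
  calc x ^ (k + 1) * ((k : ℝ) + 1) ^ r ≤ x ^ (k + 1) * ((k : ℝ) + 1) ^ (2 : ℝ) := by
        exact mul_le_mul_of_nonneg_left h2 (by positivity)
    _ = ((k : ℝ) + 1) ^ 2 * x ^ (k + 1) := by rw [h3]; ring

lemma sum_aux' {x : ℝ} (hx0 : 0 ≤ x) (hx1 : x < 1) {r : ℝ} (hr0 : 0 ≤ r) (hr : r ≤ 2) :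
    Summable (fun k : ℕ => x ^ (k + 1) * ((k : ℝ)) ^ r) := by
  refine Summable.of_nonneg_of_le (fun k => by positivity) (fun k => ?_)
    (sum_aux hx0 hx1 hr)
  exact mul_le_mul_of_nonneg_left
    (Real.rpow_le_rpow (Nat.cast_nonneg k) (by linarith) hr0) (by positivity)

/-- For `x ∈ (0,1)` and `s ∈ [-1, 0)`, the series
`(1-x)·Li_{s-1}(x) - Li_s(x) = ∑_{k=1}^∞ x^k·((1-x)k - 1)·k^{-s}` is strictly
positive. -/
theorem stmt4 (x s : ℝ) (hx : x ∈ Set.Ioo (0 : ℝ) 1) (hs : s ∈ Set.Ico (-1 : ℝ) 0) :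
    (1 - x) * Li (s - 1) x - Li s x
      = (∑' k : ℕ, x ^ (k + 1) * ((1 - x) * ((k : ℝ) + 1) - 1) * ((k : ℝ) + 1) ^ (-s)) ∧
    0 < (∑' k : ℕ, x ^ (k + 1) * ((1 - x) * ((k : ℝ) + 1) - 1) * ((k : ℝ) + 1) ^ (-s)) := by
  obtain ⟨hx0, hx1⟩ := hx
  obtain ⟨hs1, hs0⟩ := hs
  set t : ℝ := -s with ht
  have ht0 : 0 < t := by simp [ht]; linarith
  have ht1 : t ≤ 1 := by simp [ht]; linarith
  have hx0' : (0:ℝ) ≤ x := le_of_lt hx0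
  have hkpos : ∀ k : ℕ, (0:ℝ) < (k : ℝ) + 1 := fun k => by positivity
  -- the three summable families
  have hFt : Summable (fun k : ℕ => x ^ (k + 1) * ((k : ℝ) + 1) ^ t) :=
    sum_aux hx0' hx1 (by linarith)
  have hFt1 : Summable (fun k : ℕ => x ^ (k + 1) * ((k : ℝ) + 1) ^ (t + 1)) :=
    sum_aux hx0' hx1 (by linarith)
  have hu : Summable (fun k : ℕ => x ^ (k + 1) * ((k : ℝ)) ^ (t + 1)) :=
    sum_aux' hx0' hx1 (by linarith) (by linarith)
  -- Part 1: the equality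
  have hLi : ∀ r : ℝ, Li r x = ∑' k : ℕ, x ^ (k + 1) * ((k : ℝ) + 1) ^ (-r) := by
    intro r
    refine tsum_congr fun k => ?_
    rw [Real.rpow_neg (le_of_lt (hkpos k)), div_eq_mul_inv]
  have hpow : ∀ k : ℕ, ((k : ℝ) + 1) ^ (1 - s) = ((k : ℝ) + 1) * ((k : ℝ) + 1) ^ (-s) := by
    intro k
    rw [show (1 : ℝ) - s = 1 + (-s) by ring, Real.rpow_add (hkpos k), Real.rpow_one]
  have heq : (1 - x) * Li (s - 1) x - Li s x
      = ∑' k : ℕ, x ^ (k + 1) * ((1 - x) * ((k : ℝ) + 1) - 1) * ((k : ℝ) + 1) ^ (-s) := by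
    rw [hLi, hLi]
    have h1 : Summable (fun k : ℕ => x ^ (k + 1) * ((k : ℝ) + 1) ^ (-(s-1))) := by
      have : -(s-1) = t + 1 := by rw [ht]; ring
      rw [this]; exact hFt1
    have h2 : Summable (fun k : ℕ => x ^ (k + 1) * ((k : ℝ) + 1) ^ (-s)) := hFt
    rw [← tsum_mul_left, ← Summable.tsum_sub (h1.mul_left _) h2]
    refine tsum_congr fun k => ?_
    have : -(s - 1) = 1 - s := by ring
    rw [this, hpow k]
    ring
  refine ⟨heq, ?_⟩
  -- Part 2: positivity
  have hterm : ∀ k : ℕ, x ^ (k + 1) * ((1 - x) * ((k : ℝ) + 1) - 1) * ((k : ℝ) + 1) ^ (-s)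
      = (x ^ (k + 1) * ((k : ℝ) + 1) ^ (t + 1)
          - x ^ ((k+1) + 1) * (((k:ℕ) + 1 : ℕ) : ℝ) ^ (t + 1))
        - x ^ (k + 1) * ((k : ℝ) + 1) ^ t := by
    intro k
    have h1 : ((k : ℝ) + 1) ^ (t + 1) = ((k : ℝ) + 1) * ((k : ℝ) + 1) ^ t := by
      rw [Real.rpow_add (hkpos k), Real.rpow_one]; ring
    have h2 : (-s) = t := ht.symm
    push_cast
    rw [h2, h1]
    try ring
  -- shifted series of u
  have hshift : ∑' k : ℕ, x ^ ((k + 1) + 1) * (((k : ℕ) + 1 : ℕ) : ℝ) ^ (t + 1)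
      = ∑' k : ℕ, x ^ (k + 1) * ((k : ℝ)) ^ (t + 1) := by
    have h0 : x ^ (0 + 1) * ((0 : ℕ) : ℝ) ^ (t + 1) = 0 := by
      simp [Real.zero_rpow (by linarith : t + 1 ≠ 0)]
    rw [Summable.tsum_eq_zero_add hu, h0, zero_add]
    try push_cast
    try rfl
  have hsum_shift : Summable (fun k : ℕ => x ^ ((k + 1) + 1) * (((k : ℕ) + 1 : ℕ) : ℝ) ^ (t + 1)) :=
    hu.comp_injective Nat.succ_injective
  have hS : (∑' k : ℕ, x ^ (k + 1) * ((1 - x) * ((k : ℝ) + 1) - 1) * ((k : ℝ) + 1) ^ (-s))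
      = ∑' k : ℕ, x ^ (k + 1)
          * (((k : ℝ) + 1) ^ (t + 1) - ((k : ℝ)) ^ (t + 1) - ((k : ℝ) + 1) ^ t) := by
    calc (∑' k : ℕ, x ^ (k + 1) * ((1 - x) * ((k : ℝ) + 1) - 1) * ((k : ℝ) + 1) ^ (-s))
        = ∑' k : ℕ, ((x ^ (k + 1) * ((k : ℝ) + 1) ^ (t + 1)
            - x ^ ((k+1) + 1) * (((k:ℕ) + 1 : ℕ) : ℝ) ^ (t + 1))
            - x ^ (k + 1) * ((k : ℝ) + 1) ^ t) := tsum_congr hterm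
      _ = ((∑' k : ℕ, x ^ (k + 1) * ((k : ℝ) + 1) ^ (t + 1))
            - ∑' k : ℕ, x ^ ((k+1) + 1) * (((k:ℕ) + 1 : ℕ) : ℝ) ^ (t + 1))
            - ∑' k : ℕ, x ^ (k + 1) * ((k : ℝ) + 1) ^ t := by
        rw [Summable.tsum_sub (hFt1.sub hsum_shift) hFt, Summable.tsum_sub hFt1 hsum_shift]
      _ = ((∑' k : ℕ, x ^ (k + 1) * ((k : ℝ) + 1) ^ (t + 1))
            - ∑' k : ℕ, x ^ (k + 1) * ((k : ℝ)) ^ (t + 1))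
            - ∑' k : ℕ, x ^ (k + 1) * ((k : ℝ) + 1) ^ t := by rw [hshift]
      _ = ∑' k : ℕ, x ^ (k + 1)
            * (((k : ℝ) + 1) ^ (t + 1) - ((k : ℝ)) ^ (t + 1) - ((k : ℝ) + 1) ^ t) := by
        rw [← Summable.tsum_sub hFt1 hu, ← Summable.tsum_sub (hFt1.sub hu) hFt]
        exact tsum_congr fun k => by ring
  rw [hS]
  have hvsum : Summable (fun k : ℕ => x ^ (k + 1)
      * (((k : ℝ) + 1) ^ (t + 1) - ((k : ℝ)) ^ (t + 1) - ((k : ℝ) + 1) ^ t)) := by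
    refine ((hFt1.sub hu).sub hFt).congr fun k => ?_
    ring
  have hnn : ∀ k : ℕ, 0 ≤ x ^ (k + 1)
      * (((k : ℝ) + 1) ^ (t + 1) - ((k : ℝ)) ^ (t + 1) - ((k : ℝ) + 1) ^ t) := by
    intro k
    refine mul_nonneg (by positivity) ?_
    rcases Nat.eq_zero_or_pos k with hk | hk
    · subst hk
      simp [Real.zero_rpow (by linarith : t + 1 ≠ 0), Real.one_rpow]
    · have hkp : (0:ℝ) < (k : ℝ) := by exact_mod_cast hk
      have e1 : ((k : ℝ) + 1) ^ (t + 1) = ((k : ℝ) + 1) ^ t * ((k : ℝ) + 1) := by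
        rw [Real.rpow_add (hkpos k), Real.rpow_one]
      have e2 : ((k : ℝ)) ^ (t + 1) = ((k : ℝ)) ^ t * (k : ℝ) := by
        rw [Real.rpow_add hkp, Real.rpow_one]
      have e3 : ((k : ℝ)) ^ t ≤ ((k : ℝ) + 1) ^ t :=
        Real.rpow_le_rpow (le_of_lt hkp) (by linarith) (le_of_lt ht0)
      rw [e1, e2]
      nlinarith [Real.rpow_nonneg (le_of_lt hkp) t]
  refine Summable.tsum_pos hvsum hnn 1 ?_
  have h2t : (1:ℝ) < (2:ℝ) ^ t := by
    rw [show (1:ℝ) = (2:ℝ) ^ (0:ℝ) by simp]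
    exact Real.rpow_lt_rpow_of_exponent_lt (by norm_num) ht0
  have e1 : ((1:ℕ):ℝ) + 1 = 2 := by norm_num
  have e2 : (((1:ℕ)):ℝ) = 1 := by norm_num
  rw [e1, e2, Real.one_rpow, show t + 1 = t + (1:ℝ) from rfl,
    Real.rpow_add (by norm_num : (0:ℝ) < 2), Real.rpow_one]
  have hp := mul_pos (pow_pos hx0 (1+1)) (sub_pos.mpr h2t)
  nlinarith [hp]
end

section
/- For fixed a, b > 0 and c > 0, the function z ↦ B(z; a+c, b)/B(z; a, b) is monotonically increasing on (0, 1], where B(z; a, b) is the incomplete beta function. -/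
/-!
Write `f t = t^(a-1)(1-t)^(b-1)`, so that `B(z; a+c, b) = ∫_0^z t^c f t dt` and the ratio is the
`f`-weighted average of `φ t = t^c` over `(0, z)`. For `x ≤ y`, monotonicity of `φ` puts the average
over `(0, x)` below `φ x` and the average over `(x, y)` above it, so adjoining `(x, y)` can only
raise the average.
-/

open MeasureTheory intervalIntegral Set

/-- The incomplete beta function `B(z; a, b) = ∫_0^z t^{a-1}(1-t)^{b-1} dt`. -/
noncomputable def incBeta (z a b : ℝ) : ℝ :=
  ∫ t in (0 : ℝ)..z, t ^ (a - 1) * (1 - t) ^ (b - 1)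

section WeightedAverage

variable {f φ : ℝ → ℝ} {a b C : ℝ}

theorem integral_mul_le_mul_integral (hab : a ≤ b) (hf : IntervalIntegrable f volume a b)
    (hφf : IntervalIntegrable (fun t => φ t * f t) volume a b) (hf0 : ∀ t ∈ Ioo a b, 0 ≤ f t)
    (hφ : ∀ t ∈ Ioo a b, φ t ≤ C) :
    ∫ t in a..b, φ t * f t ≤ C * ∫ t in a..b, f t := by
  rw [← intervalIntegral.integral_const_mul]
  exact integral_mono_on_of_le_Ioo hab hφf (hf.const_mul C) fun t ht =>
    mul_le_mul_of_nonneg_right (hφ t ht) (hf0 t ht)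

theorem mul_integral_le_integral_mul (hab : a ≤ b) (hf : IntervalIntegrable f volume a b)
    (hφf : IntervalIntegrable (fun t => φ t * f t) volume a b) (hf0 : ∀ t ∈ Ioo a b, 0 ≤ f t)
    (hφ : ∀ t ∈ Ioo a b, C ≤ φ t) :
    C * ∫ t in a..b, f t ≤ ∫ t in a..b, φ t * f t := by
  rw [← intervalIntegral.integral_const_mul]
  exact integral_mono_on_of_le_Ioo hab (hf.const_mul C) hφf fun t ht =>
    mul_le_mul_of_nonneg_right (hφ t ht) (hf0 t ht)

theorem monotoneOn_integral_mul_div_integral (hf : IntervalIntegrable f volume a b)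
    (hφf : IntervalIntegrable (fun t => φ t * f t) volume a b) (hf_pos : ∀ t ∈ Ioo a b, 0 < f t)
    (hφ : MonotoneOn φ (Ioc a b)) :
    MonotoneOn (fun z => (∫ t in a..z, φ t * f t) / ∫ t in a..z, f t) (Ioc a b) := by
  intro x hx y hy hxy
  have hsub : ∀ {u v}, u ∈ Icc a b → v ∈ Icc a b → uIcc u v ⊆ uIcc a b := fun hu hv =>
    uIcc_subset_uIcc (Icc_subset_uIcc hu) (Icc_subset_uIcc hv)
  have ha : a ∈ Icc a b := left_mem_Icc.2 (hx.1.le.trans hx.2)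
  have hxI : x ∈ Icc a b := Ioc_subset_Icc_self hx
  have hyI : y ∈ Icc a b := Ioc_subset_Icc_self hy
  have hf₁ := hf.mono_set (hsub ha hxI)
  have hf₂ := hf.mono_set (hsub hxI hyI)
  have hφf₁ := hφf.mono_set (hsub ha hxI)
  have hφf₂ := hφf.mono_set (hsub hxI hyI)
  have hf_pos₁ : ∀ t ∈ Ioo a x, 0 < f t := fun t ht => hf_pos t ⟨ht.1, ht.2.trans_le hx.2⟩
  have hf_pos₂ : ∀ t ∈ Ioo x y, 0 < f t := fun t ht =>
    hf_pos t ⟨hx.1.trans ht.1, ht.2.trans_le hy.2⟩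
  have hF : 0 < ∫ t in a..x, f t := intervalIntegral_pos_of_pos_on hf₁ hf_pos₁ hx.1
  have hJ : 0 ≤ ∫ t in x..y, f t := by
    simpa using integral_mono_on_of_le_Ioo hxy intervalIntegrable_const hf₂
      fun t ht => (hf_pos₂ t ht).le
  have hA : ∫ t in a..x, φ t * f t ≤ φ x * ∫ t in a..x, f t :=
    integral_mul_le_mul_integral hx.1.le hf₁ hφf₁ (fun t ht => (hf_pos₁ t ht).le)
      fun t ht => hφ ⟨ht.1, ht.2.le.trans hx.2⟩ hx ht.2.le
  have hG : φ x * ∫ t in x..y, f t ≤ ∫ t in x..y, φ t * f t :=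
    mul_integral_le_integral_mul hxy hf₂ hφf₂ (fun t ht => (hf_pos₂ t ht).le)
      fun t ht => hφ hx ⟨hx.1.trans ht.1, ht.2.le.trans hy.2⟩ ht.1.le
  dsimp only
  rw [← integral_add_adjacent_intervals hφf₁ hφf₂, ← integral_add_adjacent_intervals hf₁ hf₂,
    div_le_div_iff₀ hF (by linarith)]
  nlinarith [mul_le_mul_of_nonneg_right hA hJ, mul_le_mul_of_nonneg_left hG hF.le]

end WeightedAverage

theorem intervalIntegrable_rpow_mul_one_sub_rpow {a b : ℝ} (ha : 0 < a) (hb : 0 < b) :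
    IntervalIntegrable (fun t : ℝ => t ^ (a - 1) * (1 - t) ^ (b - 1)) volume 0 1 := by
  have h := Complex.betaIntegral_convergent (u := (a : ℂ)) (v := (b : ℂ))
    (by simpa using ha) (by simpa using hb)
  refine (show IntervalIntegrable _ volume 0 1 from ⟨h.1.re, h.2.re⟩).congr fun t ht => ?_
  rw [uIoc_of_le zero_le_one] at ht
  have h1 : 0 ≤ 1 - t := by linarith [ht.2]
  have e : ((t : ℂ) ^ ((a : ℂ) - 1) * (1 - (t : ℂ)) ^ ((b : ℂ) - 1)) =
      ((t ^ (a - 1) * (1 - t) ^ (b - 1) : ℝ) : ℂ) := by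
    push_cast [Complex.ofReal_cpow ht.1.le, Complex.ofReal_cpow h1]
    rfl
  rw [RCLike.re_to_complex, e, Complex.ofReal_re]

theorem incBeta_add_eq_integral_rpow_mul {z : ℝ} (a b c : ℝ) (hz : 0 ≤ z) :
    incBeta z (a + c) b = ∫ t in (0 : ℝ)..z, t ^ c * (t ^ (a - 1) * (1 - t) ^ (b - 1)) := by
  -- only almost everywhere: at `t = 0` the integrands differ when `a + c = 1`, as `0 ^ 0 = 1`
  refine integral_congr_ae (Filter.Eventually.of_forall fun t ht => ?_)
  rw [uIoc_of_le hz] at ht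
  rw [← mul_assoc, ← Real.rpow_add ht.1]
  ring_nf

/-- For fixed `a, b > 0` and `c > 0`, the function
`z ↦ B(z; a+c, b)/B(z; a, b)` is monotonically increasing on `(0, 1]`. -/
theorem stmt14 (a b c : ℝ) (ha : 0 < a) (hb : 0 < b) (hc : 0 < c) :
    MonotoneOn (fun z : ℝ => incBeta z (a + c) b / incBeta z a b)
      (Set.Ioc (0 : ℝ) 1) := by
  have hf := intervalIntegrable_rpow_mul_one_sub_rpow ha hb
  have hφf := hf.continuousOn_mul (g := fun t => t ^ c) fun t _ =>
    (Real.continuousAt_rpow_const t c (Or.inr hc.le)).continuousWithinAt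
  have hf_pos : ∀ t ∈ Ioo (0 : ℝ) 1, 0 < t ^ (a - 1) * (1 - t) ^ (b - 1) := fun t ht => by
    have ht₀ : 0 < t := ht.1
    have ht₁ : 0 < 1 - t := by linarith [ht.2]
    positivity
  refine (monotoneOn_integral_mul_div_integral hf hφf hf_pos
    fun x hx y _ hxy => Real.rpow_le_rpow hx.1.le hxy hc.le).congr fun z hz => ?_
  rw [incBeta_add_eq_integral_rpow_mul a b c hz.1.le, incBeta]
end
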